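/- Let C be the solution of the matrix ODE Ċ(t) = (A + u(t)B)C(t), C(0) = I, on [0,T], where A + kB is Metzler for all k ∈ [−1,1] and u : [0,T] → [−1,1] is measurable. Then C(t) has all entries nonnegative for every t ∈ [0,T]. -/

import Mathlib

/-!
Fix a column `x` of `C` and perturb it to `y = x + ε e^{Kt}`, which is positive at `t = 0`.
At a first time `t₀` where some coordinate `y i` vanishes, all coordinates are still nonnegative,
so the Metzler structure leaves only the diagonal term negative, and it is small near `t₀`; with
`K = n Λ + 1` (`Λ` bounding the entries of `A + u B`) the growth of the perturbation then makes
`y i` strictly increasing just before `t₀`, which is impossible. Letting `ε → 0` gives `x ≥ 0`.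
-/

open Matrix

attribute [local instance] Matrix.frobeniusNormedAddCommGroup Matrix.frobeniusNormedSpace

open MeasureTheory Set Filter Topology intervalIntegral

namespace Matrix

def IsMetzler {n R : Type*} [Zero R] [LE R] (M : Matrix n n R) : Prop :=
  ∀ i j, i ≠ j → 0 ≤ M i j

variable {m n : Type*}

theorem abs_add_smul_apply_le (A B : Matrix m n ℝ) {k : ℝ} (hk : |k| ≤ 1) (i : m) (j : n) :
    |(A + k • B) i j| ≤ |A i j| + |B i j| := by
  rw [add_apply, smul_apply, smul_eq_mul]
  refine (abs_add_le _ _).trans (add_le_add le_rfl ?_)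
  rw [abs_mul]
  exact mul_le_of_le_one_left (abs_nonneg _) hk

variable [Fintype n]

theorem IsMetzler.mul_apply_diag_le_mulVec_apply {R : Type*} [Semiring R] [PartialOrder R]
    [IsOrderedRing R] {M : Matrix n n R} (hM : M.IsMetzler) {v : n → R} (hv : 0 ≤ v) (i : n) :
    M i i * v i ≤ (M *ᵥ v) i := by
  classical
  rw [mulVec, dotProduct, ← Finset.add_sum_erase _ _ (Finset.mem_univ i)]
  exact le_add_of_nonneg_right <| Finset.sum_nonneg fun j hj ↦
    mul_nonneg (hM i j (Finset.ne_of_mem_erase hj).symm) (hv j)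

theorem IsMetzler.neg_le_mulVec_apply {M : Matrix n n ℝ} (hM : M.IsMetzler) {Λ : ℝ}
    (hΛ : ∀ i j, |M i j| ≤ Λ) {x : n → ℝ} {c : ℝ} (hc : 0 ≤ c) (hx : ∀ j, -c ≤ x j) (i : n) :
    -(Λ * (x i + c)) - Fintype.card n * Λ * c ≤ (M *ᵥ x) i := by
  set v : n → ℝ := fun j ↦ x j + c
  have hv : 0 ≤ v := fun j ↦ neg_le_iff_add_nonneg.1 (hx j)
  have hdiag : -(Λ * v i) ≤ M i i * v i := by
    rw [← neg_mul]
    exact mul_le_mul_of_nonneg_right (neg_le_of_abs_le (hΛ i i)) (hv i)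
  have hrow : ∑ j, M i j ≤ Fintype.card n * Λ := by
    have := Finset.sum_le_card_nsmul Finset.univ (M i) Λ fun j _ ↦ (abs_le.1 (hΛ i j)).2
    rwa [Finset.card_univ, nsmul_eq_mul] at this
  have hsplit : (M *ᵥ v) i = (M *ᵥ x) i + (∑ j, M i j) * c := by
    simp [v, mulVec, dotProduct, mul_add, Finset.sum_add_distrib, Finset.sum_mul]
  nlinarith [hM.mul_apply_diag_le_mulVec_apply hv i]

theorem intervalIntegral_apply [Fintype m] {F : ℝ → Matrix m n ℝ} {s t : ℝ}
    (hF : ∀ i j, IntervalIntegrable (fun τ ↦ F τ i j) volume s t) (i : m) (j : n) :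
    (∫ τ in s..t, F τ) i j = ∫ τ in s..t, F τ i j := by
  classical
  -- Instance search would give `Matrix m n ℝ` the product topology, which is not reducibly the
  -- Frobenius one, so integrability for the Frobenius norm has to be spelled out.
  have hF' : @IntervalIntegrable (Matrix m n ℝ)
      frobeniusNormedAddCommGroup.toUniformSpace.toTopologicalSpace _ F volume s t := by
    have hsum : F = fun τ ↦ ∑ p, ∑ q, F τ p q • single p q (1 : ℝ) := by
      ext τ : 1
      simpa only [smul_single, smul_eq_mul, mul_one] using matrix_eq_sum_single (F τ)
    rw [hsum, intervalIntegrable_iff]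
    exact integrable_finsetSum _ fun p _ ↦ integrable_finsetSum _ fun q _ ↦
      (intervalIntegrable_iff.1 (hF p q)).smul_const _
  exact ((LinearMap.toContinuousLinearMap (entryLinearMap ℝ ℝ i j)).intervalIntegral_comp_comm
    hF').symm

end Matrix

theorem sub_eq_intervalIntegral_of_eq_add_integral {f g : ℝ → ℝ} {c a b : ℝ}
    (hg : IntegrableOn g (Icc a b)) (hf : ∀ t ∈ Icc a b, f t = c + ∫ τ in a..t, g τ)
    {s t : ℝ} (hs : s ∈ Icc a b) (ht : t ∈ Icc a b) :
    f t - f s = ∫ τ in s..t, g τ := by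
  have ha : a ∈ Icc a b := ⟨le_rfl, hs.1.trans hs.2⟩
  rw [hf t ht, hf s hs, add_sub_add_left_eq_sub, integral_interval_sub_left
    (hg.mono_set (uIcc_subset_Icc ha ht)).intervalIntegrable
    (hg.mono_set (uIcc_subset_Icc ha hs)).intervalIntegrable]

theorem exists_lt_of_sub_eq_integral {f g φ : ℝ → ℝ} {a t : ℝ} (hat : a < t)
    (hg : IntervalIntegrable g volume a t)
    (hfg : ∀ s ∈ Icc a t, f t - f s = ∫ τ in s..t, g τ)
    (hφ : ContinuousWithinAt φ (Icc a t) t) (hφt : 0 < φ t)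
    (hφg : ∀ τ ∈ Icc a t, φ τ ≤ g τ) :
    ∃ s ∈ Ico a t, f s < f t := by
  have hpos : ∀ᶠ τ in 𝓝[≤] t, 0 < φ τ := by
    rw [← nhdsWithin_Icc_eq_nhdsLE hat]
    exact hφ.eventually_const_lt hφt
  obtain ⟨l, hlt, hl⟩ := mem_nhdsLE_iff_exists_Ioc_subset.1 hpos
  set s := max a l
  have hst : s < t := max_lt hat hlt
  have hs : s ∈ Icc a t := ⟨le_max_left a l, hst.le⟩
  have hint : 0 < ∫ τ in s..t, g τ := by
    refine intervalIntegral_pos_of_pos_on (hg.mono_set (uIcc_subset_uIcc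
      (Icc_subset_uIcc hs) (Icc_subset_uIcc ⟨hat.le, le_rfl⟩))) (fun τ hτ ↦ ?_) hst
    exact (hl ⟨(le_max_right a l).trans_lt hτ.1, hτ.2.le⟩).trans_le
      (hφg τ ⟨hs.1.trans hτ.1.le, hτ.2.le⟩)
  exact ⟨s, ⟨hs.1, hst⟩, by linarith [hfg s hs]⟩

theorem ContinuousOn.nonneg_of_Icc_nonneg_imp_pos {ι : Type*} [Finite ι] {y : ℝ → ι → ℝ}
    {a b : ℝ} (hy : ContinuousOn y (Icc a b)) (ha : 0 ≤ y a)
    (hpos : ∀ t ∈ Ico a b, (∀ τ ∈ Icc a t, 0 ≤ y τ) → ∀ i, 0 < y t i) :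
    ∀ t ∈ Icc a b, 0 ≤ y t := by
  refine IsClosed.Icc_subset_of_forall_mem_nhdsGT_of_Icc_subset (s := {t | 0 ≤ y t}) ?_ ha
    fun t ht hnn ↦ ?_
  · rw [inter_comm]
    exact hy.preimage_isClosed_of_isClosed isClosed_Icc isClosed_Ici
  have hlim : Tendsto y (𝓝[>] t) (𝓝 (y t)) :=
    (hy t (Ico_subset_Icc_self ht)).mono_of_mem_nhdsWithin
      (mem_of_superset (Icc_mem_nhdsGT ht.2) (Icc_subset_Icc_left ht.1))
  filter_upwards [eventually_all.2 fun i ↦ (tendsto_pi_nhds.1 hlim i).eventually_const_lt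
    (hpos t ht hnn i)] with τ hτ i using (hτ i).le

theorem ContinuousOn.nonneg_of_sub_eq_integral {ι : Type*} [Finite ι] {y : ℝ → ι → ℝ}
    {g φ : ι → ℝ → ℝ} {a b : ℝ} (hy : ContinuousOn y (Icc a b)) (ha : ∀ i, 0 < y a i)
    (hg : ∀ i, IntegrableOn (g i) (Icc a b))
    (hyg : ∀ s ∈ Icc a b, ∀ t ∈ Icc a b, ∀ i, y t i - y s i = ∫ τ in s..t, g i τ)
    (hφ : ∀ i, ContinuousOn (φ i) (Icc a b))
    (hφg : ∀ τ ∈ Icc a b, 0 ≤ y τ → ∀ i, φ i τ ≤ g i τ)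
    (hφ_pos : ∀ t ∈ Icc a b, ∀ i, y t i = 0 → 0 < φ i t) :
    ∀ t ∈ Icc a b, 0 ≤ y t := by
  refine hy.nonneg_of_Icc_nonneg_imp_pos (fun i ↦ (ha i).le) fun t ht hnn i ↦ ?_
  rcases ht.1.eq_or_lt with rfl | hat
  · exact ha i
  replace ht : t ∈ Icc a b := Ico_subset_Icc_self ht
  have hat_sub : Icc a t ⊆ Icc a b := Icc_subset_Icc_right ht.2
  by_contra hle
  have hzero : y t i = 0 := le_antisymm (not_lt.1 hle) (hnn t ⟨ht.1, le_rfl⟩ i)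
  obtain ⟨s, hs, hlt⟩ := exists_lt_of_sub_eq_integral (f := fun τ ↦ y τ i) hat
    ((hg i).mono_set (uIcc_of_le hat.le ▸ hat_sub)).intervalIntegrable
    (fun s hs ↦ hyg s (hat_sub hs) t ht i)
    ((hφ i).mono hat_sub t ⟨ht.1, le_rfl⟩) (hφ_pos t ht i hzero)
    (fun τ hτ ↦ hφg τ (hat_sub hτ) (hnn τ hτ) i)
  exact (hnn s ⟨hs.1, hs.2.le⟩ i).not_gt (hlt.trans_eq hzero)

section MetzlerIntegralEquation

variable {n : Type*} [Fintype n] {M : ℝ → Matrix n n ℝ} {x : ℝ → n → ℝ} {a b Λ : ℝ}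

theorem integrableOn_mulVec_apply (hMmeas : ∀ i j, Measurable fun τ ↦ M τ i j)
    (hΛ : ∀ τ i j, |M τ i j| ≤ Λ) (hx : ContinuousOn x (Icc a b)) (i : n) :
    IntegrableOn (fun τ ↦ (M τ *ᵥ x τ) i) (Icc a b) := by
  refine integrable_finsetSum _ fun j _ ↦ ?_
  exact (Measure.integrableOn_of_bounded measure_Icc_lt_top.ne (hMmeas i j).aestronglyMeasurable
    (ae_of_all _ fun τ ↦ (Real.norm_eq_abs _).trans_le (hΛ τ i j))).mul_continuousOn
    ((continuous_apply j).comp_continuousOn hx) isCompact_Icc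

theorem nonneg_add_exp_of_isMetzler (hM : ∀ τ, (M τ).IsMetzler)
    (hMmeas : ∀ i j, Measurable fun τ ↦ M τ i j) (hΛ : ∀ τ i j, |M τ i j| ≤ Λ)
    (hx : ContinuousOn x (Icc a b)) {x₀ : n → ℝ} (hx₀ : 0 ≤ x₀)
    (heq : ∀ t ∈ Icc a b, ∀ i, x t i = x₀ i + ∫ τ in a..t, (M τ *ᵥ x τ) i)
    {ε : ℝ} (hε : 0 < ε) :
    ∀ t ∈ Icc a b, ∀ i, 0 ≤ x t i + ε * Real.exp ((Fintype.card n * Λ + 1) * t) := by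
  set K := (Fintype.card n : ℝ) * Λ + 1 with hK
  set e : ℝ → ℝ := fun t ↦ ε * Real.exp (K * t)
  set y : ℝ → n → ℝ := fun t i ↦ x t i + e t with hy
  have he : ∀ t, HasDerivAt e (K * e t) t := fun t ↦ by
    simpa [e, mul_comm, mul_left_comm] using
      (((hasDerivAt_id t).const_mul K).exp).const_mul ε
  have he_pos : ∀ t, 0 < e t := fun t ↦ mul_pos hε (Real.exp_pos _)
  have he_cont : Continuous e := continuous_iff_continuousAt.2 fun t ↦ (he t).continuousAt
  have hy_cont : ContinuousOn y (Icc a b) :=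
    continuousOn_pi.2 fun i ↦ ((continuous_apply i).comp_continuousOn hx).add
      he_cont.continuousOn
  have hMx := integrableOn_mulVec_apply hMmeas hΛ hx
  have hKe_int : IntegrableOn (fun τ ↦ K * e τ) (Icc a b) :=
    (continuous_const.mul he_cont).integrableOn_Icc
  intro t ht
  have ha : a ∈ Icc a b := ⟨le_rfl, ht.1.trans ht.2⟩
  refine hy_cont.nonneg_of_sub_eq_integral (g := fun i τ ↦ (M τ *ᵥ x τ) i + K * e τ)
    (φ := fun i τ ↦ e τ - Λ * y τ i) (fun i ↦ ?_) (fun i ↦ (hMx i).add hKe_int)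
    (fun s hs t ht i ↦ ?_) (fun i ↦ ?_) (fun τ _ hτ i ↦ ?_) (fun t _ i hi ↦ ?_) t ht
  · simp only [hy, heq a ha i, integral_same, add_zero]
    exact add_pos_of_nonneg_of_pos (hx₀ i) (he_pos a)
  · have hst := uIcc_subset_Icc hs ht
    rw [integral_add ((hMx i).mono_set hst).intervalIntegrable
        (hKe_int.mono_set hst).intervalIntegrable,
      ← sub_eq_intervalIntegral_of_eq_add_integral (hMx i) (fun t ht ↦ heq t ht i) hs ht,
      integral_eq_sub_of_hasDerivAt (fun τ _ ↦ he τ) (hKe_int.mono_set hst).intervalIntegrable]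
    ring
  · exact he_cont.continuousOn.sub
      (continuousOn_const.mul ((continuous_apply i).comp_continuousOn hy_cont))
  · have := (hM τ).neg_le_mulVec_apply (hΛ τ) (x := x τ) (he_pos τ).le
      (fun j ↦ neg_le_iff_add_nonneg.2 (hτ j)) i
    linarith [show K * e τ = Fintype.card n * Λ * e τ + e τ by rw [hK]; ring]
  · simpa [hi] using he_pos t

theorem nonneg_of_eq_add_integral_of_isMetzler (hM : ∀ τ, (M τ).IsMetzler)
    (hMmeas : ∀ i j, Measurable fun τ ↦ M τ i j) (hΛ : ∀ τ i j, |M τ i j| ≤ Λ)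
    (hx : ContinuousOn x (Icc a b)) {x₀ : n → ℝ} (hx₀ : 0 ≤ x₀)
    (heq : ∀ t ∈ Icc a b, ∀ i, x t i = x₀ i + ∫ τ in a..t, (M τ *ᵥ x τ) i) :
    ∀ t ∈ Icc a b, 0 ≤ x t := by
  intro t ht i
  refine le_of_forall_pos_le_add fun δ hδ ↦ ?_
  have hexp := Real.exp_pos ((Fintype.card n * Λ + 1) * t)
  simpa [div_mul_cancel₀ _ hexp.ne'] using
    nonneg_add_exp_of_isMetzler hM hMmeas hΛ hx hx₀ heq (div_pos hδ hexp) t ht i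

end MetzlerIntegralEquation

theorem transition_matrix_nonneg_general {n : Type*} [Fintype n] [DecidableEq n]
    (A B : Matrix n n ℝ) (T : ℝ)
    (hMetzler : ∀ k : ℝ, k ∈ Set.Icc (-1 : ℝ) 1 → ∀ i j, i ≠ j → 0 ≤ (A + k • B) i j)
    (u : ℝ → ℝ) (hu : Measurable u) (hu1 : ∀ t, u t ∈ Set.Icc (-1 : ℝ) 1)
    (C : ℝ → Matrix n n ℝ)
    (hCcont : ContinuousOn C (Set.Icc 0 T))
    (hC : ∀ t ∈ Set.Icc (0 : ℝ) T,
      C t = 1 + ∫ τ in (0 : ℝ)..t, (A + u τ • B) * C τ) :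
    ∀ t ∈ Set.Icc (0 : ℝ) T, ∀ i j, 0 ≤ C t i j := by
  obtain ⟨Λ, hΛ⟩ := Finite.bddAbove_range fun p : n × n ↦ |A p.1 p.2| + |B p.1 p.2|
  have hMΛ : ∀ τ i j, |(A + u τ • B) i j| ≤ Λ := fun τ i j ↦
    (abs_add_smul_apply_le A B (abs_le.2 (hu1 τ)) i j).trans (hΛ ⟨(i, j), rfl⟩)
  have hMmeas : ∀ i j, Measurable fun τ ↦ (A + u τ • B) i j := fun i j ↦
    measurable_const.add (hu.mul measurable_const)
  have hcol : ∀ j, ContinuousOn (fun τ k ↦ C τ k j) (Icc 0 T) := fun j ↦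
    continuousOn_pi.2 fun k ↦ (continuous_apply_apply k j).comp_continuousOn hCcont
  intro t ht i j
  refine nonneg_of_eq_add_integral_of_isMetzler (fun τ ↦ hMetzler (u τ) (hu1 τ)) hMmeas hMΛ
    (hcol j) (x₀ := fun k ↦ (1 : Matrix n n ℝ) k j) (fun k ↦ ?_) (fun s hs k ↦ ?_) t ht i
  · by_cases h : k = j <;> simp [one_apply, h]
  · rw [hC s hs, Matrix.add_apply, intervalIntegral_apply (F := fun τ ↦ (A + u τ • B) * C τ)
      fun p q ↦ ((integrableOn_mulVec_apply hMmeas hMΛ (hcol q) p).mono_set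
        (uIcc_subset_Icc ⟨le_rfl, hs.1.trans hs.2⟩ hs)).intervalIntegrable]
    rfl

theorem transition_matrix_nonneg {n : Type*} [Fintype n] [DecidableEq n]
    (A B : Matrix n n ℝ) (T : ℝ) (hT : 0 ≤ T)
    (hMetzler : ∀ k : ℝ, k ∈ Set.Icc (-1 : ℝ) 1 → ∀ i j, i ≠ j → 0 ≤ (A + k • B) i j)
    (u : ℝ → ℝ) (hu : Measurable u) (hu1 : ∀ t, u t ∈ Set.Icc (-1 : ℝ) 1)
    (C : ℝ → Matrix n n ℝ) (hC0 : C 0 = 1)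
    (hCcont : ContinuousOn C (Set.Icc 0 T))
    (hC : ∀ t ∈ Set.Icc (0 : ℝ) T,
      C t = 1 + ∫ τ in (0 : ℝ)..t, (A + u τ • B) * C τ) :
    ∀ t ∈ Set.Icc (0 : ℝ) T, ∀ i j, 0 ≤ C t i j :=
  transition_matrix_nonneg_general A B T hMetzler u hu hu1 C hCcont hC
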